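/- (Asymptotic expansion of the standard normal quantile) Let t : (0,1) → ℝ be the inverse of the standard normal CDF, i.e. Φ(t(q)) = q for all q ∈ (0,1). Then as q → 0⁺, t(q) → −∞ and t(q)² + 2 log q + log(−2 log q) + log(2π) → 0; in particular lim_{q→0⁺} t(q)/√(−2 log q) = −1. -/

import Mathlib

/-!
Integrating `(φ(s)/(-s))' = φ(s)(1 + s⁻²)` over `(-∞, x)` gives the Mills-ratio bounds
`Φ(x) ≤ φ(x)/(-x) ≤ (1 + x⁻²) Φ(x)` for `x < 0`. Taking logarithms, the remainder
`x² + 2 log Φ(x) + 2 log(-x) + log 2π` lies in `[-2 log(1 + x⁻²), 0]`, so it tends to `0` as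
`x → -∞`; in particular `-2 log Φ(x) ~ x²`, so `log(-2 log Φ(x))` may replace `2 log(-x)`.
Since `Φ(t(q)) = q` forces `t(q) → -∞`, substituting `x = t(q)` gives the three limits.
-/

open MeasureTheory Real Filter

/-- The standard normal density `φ(x) = (2π)^{-1/2} exp(-x²/2)`. -/
noncomputable def stdNormalPDF (x : ℝ) : ℝ :=
  (Real.sqrt (2 * Real.pi))⁻¹ * Real.exp (-x ^ 2 / 2)

/-- The standard normal CDF `Φ(x) = ∫_{-∞}^x φ(t) dt`. -/
noncomputable def stdNormalCDF (x : ℝ) : ℝ :=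
  ∫ t in Set.Iio x, stdNormalPDF t

/-- `τ_p = √(2 log p)`. -/
noncomputable def tauP (p : ℕ) : ℝ := Real.sqrt (2 * Real.log p)

/-- The density of `N(μ_p, τ_p²)` at `x`, namely `τ_p⁻¹ φ((x - μ_p)/τ_p)`. -/
noncomputable def mvpDens (μ : ℕ → ℝ) (p : ℕ) (x : ℝ) : ℝ :=
  (tauP p)⁻¹ * stdNormalPDF ((x - μ p) / tauP p)

open Set Topology

lemma stdNormalPDF_pos (x : ℝ) : 0 < stdNormalPDF x := by
  unfold stdNormalPDF
  positivity

lemma continuous_stdNormalPDF : Continuous stdNormalPDF := by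
  unfold stdNormalPDF
  fun_prop

lemma integrable_stdNormalPDF : Integrable stdNormalPDF := by
  have h := (integrable_exp_neg_mul_sq (b := (1 / 2 : ℝ)) (by norm_num)).const_mul
    (Real.sqrt (2 * Real.pi))⁻¹
  refine h.congr (Eventually.of_forall fun x => ?_)
  simp only [stdNormalPDF]
  ring_nf

lemma hasDerivAt_stdNormalPDF (x : ℝ) : HasDerivAt stdNormalPDF (-x * stdNormalPDF x) x := by
  have h : HasDerivAt (fun y : ℝ => -y ^ 2 / 2) (-x) x := by
    refine ((hasDerivAt_pow 2 x).neg.div_const 2).congr_deriv ?_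
    simp only [Nat.cast_ofNat]
    ring
  refine (h.exp.const_mul (Real.sqrt (2 * Real.pi))⁻¹).congr_deriv ?_
  simp only [stdNormalPDF]
  ring

lemma tendsto_stdNormalPDF_atBot : Tendsto stdNormalPDF atBot (𝓝 0) := by
  have hsq : Tendsto (fun x : ℝ => x ^ 2) atBot atTop :=
    ((tendsto_pow_atTop two_ne_zero).comp tendsto_neg_atBot_atTop).congr fun x => by simp
  have h := (tendsto_exp_atBot.comp
    ((tendsto_neg_atTop_atBot.comp hsq).atBot_div_const two_pos)).const_mul
      (Real.sqrt (2 * Real.pi))⁻¹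
  rw [mul_zero] at h
  exact h.congr fun x => by simp only [Function.comp_apply, stdNormalPDF, neg_div]

lemma log_stdNormalPDF (x : ℝ) :
    Real.log (stdNormalPDF x) = -Real.log (2 * Real.pi) / 2 - x ^ 2 / 2 := by
  unfold stdNormalPDF
  rw [Real.log_mul (by positivity) (Real.exp_ne_zero _), Real.log_inv,
    Real.log_sqrt (by positivity), Real.log_exp]
  ring

lemma stdNormalCDF_pos (x : ℝ) : 0 < stdNormalCDF x := by
  rw [stdNormalCDF, setIntegral_pos_iff_support_of_nonneg_ae
    (Eventually.of_forall fun t => (stdNormalPDF_pos t).le)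
    integrable_stdNormalPDF.integrableOn,
    Function.support_eq_univ fun t => (stdNormalPDF_pos t).ne', univ_inter]
  simp [Real.volume_Iio]

lemma monotone_stdNormalCDF : Monotone stdNormalCDF := fun _ _ hxy =>
  setIntegral_mono_set integrable_stdNormalPDF.integrableOn
    (Eventually.of_forall fun t => (stdNormalPDF_pos t).le)
    (Iio_subset_Iio hxy).eventuallyLE

lemma stdNormalPDF_div_sq_le {s x : ℝ} (hsx : s ≤ x) (hx : x < 0) :
    stdNormalPDF s / s ^ 2 ≤ stdNormalPDF s / x ^ 2 :=
  div_le_div_of_nonneg_left (stdNormalPDF_pos s).le (by nlinarith) (by nlinarith)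

lemma integrableOn_stdNormalPDF_div_sq {x : ℝ} (hx : x < 0) :
    IntegrableOn (fun s => stdNormalPDF s / s ^ 2) (Iic x) := by
  refine (integrable_stdNormalPDF.div_const (x ^ 2)).integrableOn.mono'
    (continuous_stdNormalPDF.measurable.div (measurable_id.pow_const 2)).aestronglyMeasurable
    ((ae_restrict_iff' measurableSet_Iic).2 (Eventually.of_forall fun s hs => ?_))
  rw [Real.norm_of_nonneg (div_nonneg (stdNormalPDF_pos s).le (sq_nonneg s))]
  exact stdNormalPDF_div_sq_le hs hx

lemma integral_Iio_stdNormalPDF_add_div_sq {x : ℝ} (hx : x < 0) :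
    ∫ s in Iio x, (stdNormalPDF s + stdNormalPDF s / s ^ 2) = stdNormalPDF x / -x := by
  have hderiv : ∀ s ∈ Iio x,
      HasDerivAt (fun s => stdNormalPDF s / -s) (stdNormalPDF s + stdNormalPDF s / s ^ 2) s := by
    intro s hs
    have hs0 : s ≠ 0 := (hs.out.trans hx).ne
    refine ((hasDerivAt_stdNormalPDF s).div (hasDerivAt_neg s)
      (neg_ne_zero.2 hs0)).congr_deriv ?_
    field_simp
    ring
  have hcont : ContinuousWithinAt (fun s => stdNormalPDF s / -s) (Iic x) x :=
    (continuous_stdNormalPDF.continuousAt.div continuousAt_neg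
      (neg_ne_zero.2 hx.ne)).continuousWithinAt
  have hlim : Tendsto (fun s => stdNormalPDF s / -s) atBot (𝓝 0) := by
    simpa [div_eq_mul_inv] using
      tendsto_stdNormalPDF_atBot.mul (tendsto_neg_atBot_atTop.inv_tendsto_atTop)
  rw [← integral_Iic_eq_integral_Iio, integral_Iic_of_hasDerivAt_of_tendsto hcont hderiv
    (integrable_stdNormalPDF.integrableOn.add (integrableOn_stdNormalPDF_div_sq hx)) hlim,
    sub_zero]

lemma stdNormalCDF_add_integral_div_sq {x : ℝ} (hx : x < 0) :
    stdNormalCDF x + ∫ s in Iio x, stdNormalPDF s / s ^ 2 = stdNormalPDF x / -x := by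
  rw [← integral_Iio_stdNormalPDF_add_div_sq hx, stdNormalCDF, integral_add
    integrable_stdNormalPDF.integrableOn
    ((integrableOn_stdNormalPDF_div_sq hx).mono_set Iio_subset_Iic_self)]

lemma stdNormalCDF_le_stdNormalPDF_div_neg {x : ℝ} (hx : x < 0) :
    stdNormalCDF x ≤ stdNormalPDF x / -x := by
  rw [← stdNormalCDF_add_integral_div_sq hx, le_add_iff_nonneg_right]
  exact setIntegral_nonneg measurableSet_Iio fun s _ =>
    div_nonneg (stdNormalPDF_pos s).le (sq_nonneg s)

lemma stdNormalPDF_div_neg_le {x : ℝ} (hx : x < 0) :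
    stdNormalPDF x / -x ≤ (1 + (x ^ 2)⁻¹) * stdNormalCDF x := by
  have hle : ∫ s in Iio x, stdNormalPDF s / s ^ 2 ≤ ∫ s in Iio x, stdNormalPDF s / x ^ 2 :=
    setIntegral_mono_on ((integrableOn_stdNormalPDF_div_sq hx).mono_set Iio_subset_Iic_self)
      (integrable_stdNormalPDF.div_const _).integrableOn measurableSet_Iio
      fun s hs => stdNormalPDF_div_sq_le hs.out.le hx
  rw [integral_div, ← stdNormalCDF] at hle
  rw [← stdNormalCDF_add_integral_div_sq hx]
  linarith [div_eq_inv_mul (stdNormalCDF x) (x ^ 2)]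

lemma Monotone.tendsto_atBot_of_eventually_comp_eq {F t : ℝ → ℝ} (hF : Monotone F)
    (hpos : ∀ x, 0 < F x) (ht : ∀ᶠ q in 𝓝[>] 0, F (t q) = q) :
    Tendsto t (𝓝[>] 0) atBot := by
  refine tendsto_atBot.2 fun b => ?_
  filter_upwards [ht, Ioo_mem_nhdsGT (hpos b)] with q hq hqb
  by_contra! hbt
  linarith [hF hbt.le, hqb.2]

noncomputable def stdNormalCDFLogRemainder (x : ℝ) : ℝ :=
  x ^ 2 + 2 * Real.log (stdNormalCDF x) + 2 * Real.log (-x) + Real.log (2 * π)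

lemma log_stdNormalPDF_div_neg {x : ℝ} (hx : x < 0) :
    2 * Real.log (stdNormalPDF x / -x) = -Real.log (2 * π) - x ^ 2 - 2 * Real.log (-x) := by
  rw [Real.log_div (stdNormalPDF_pos x).ne' (neg_ne_zero.2 hx.ne), log_stdNormalPDF]
  ring

lemma stdNormalCDFLogRemainder_nonpos {x : ℝ} (hx : x < 0) : stdNormalCDFLogRemainder x ≤ 0 := by
  have h := Real.log_le_log (stdNormalCDF_pos x) (stdNormalCDF_le_stdNormalPDF_div_neg hx)
  rw [stdNormalCDFLogRemainder]
  linarith [log_stdNormalPDF_div_neg hx]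

lemma neg_two_log_le_stdNormalCDFLogRemainder {x : ℝ} (hx : x < 0) :
    -(2 * Real.log (1 + (x ^ 2)⁻¹)) ≤ stdNormalCDFLogRemainder x := by
  have h := Real.log_le_log (div_pos (stdNormalPDF_pos x) (neg_pos.2 hx))
    (stdNormalPDF_div_neg_le hx)
  rw [Real.log_mul (by positivity) (stdNormalCDF_pos x).ne'] at h
  rw [stdNormalCDFLogRemainder]
  linarith [log_stdNormalPDF_div_neg hx]

lemma tendsto_inv_sq_atBot : Tendsto (fun x : ℝ => (x ^ 2)⁻¹) atBot (𝓝 0) :=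
  (((tendsto_pow_atTop two_ne_zero).comp tendsto_neg_atBot_atTop).congr fun x => by
    simp).inv_tendsto_atTop

lemma tendsto_stdNormalCDFLogRemainder_atBot :
    Tendsto stdNormalCDFLogRemainder atBot (𝓝 0) := by
  have hlow : Tendsto (fun x : ℝ => -(2 * Real.log (1 + (x ^ 2)⁻¹))) atBot (𝓝 0) := by
    have h := tendsto_inv_sq_atBot.const_add 1
    rw [add_zero] at h
    simpa using ((Real.continuousAt_log one_ne_zero).tendsto.comp h).const_mul 2 |>.neg
  refine tendsto_of_tendsto_of_tendsto_of_le_of_le' hlow tendsto_const_nhds ?_ ?_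
  · filter_upwards [eventually_lt_atBot 0] with x hx
    exact neg_two_log_le_stdNormalCDFLogRemainder hx
  · filter_upwards [eventually_lt_atBot 0] with x hx
    exact stdNormalCDFLogRemainder_nonpos hx

lemma tendsto_log_neg_div_sq_atBot : Tendsto (fun x : ℝ => Real.log (-x) / x ^ 2) atBot (𝓝 0) := by
  have h := ((Real.tendsto_pow_log_div_mul_add_atTop 1 0 1 one_ne_zero).mul
    tendsto_inv_atTop_zero).comp tendsto_neg_atBot_atTop
  rw [mul_zero] at h
  refine h.congr fun x => ?_
  simp only [Function.comp_apply, pow_one, one_mul, add_zero, ← neg_sq x]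
  ring

lemma tendsto_neg_two_log_stdNormalCDF_div_sq_atBot :
    Tendsto (fun x => -(2 * Real.log (stdNormalCDF x)) / x ^ 2) atBot (𝓝 1) := by
  have h := ((tendsto_log_neg_div_sq_atBot.const_mul 2).add
    (tendsto_inv_sq_atBot.const_mul (Real.log (2 * π)))).sub
      (tendsto_stdNormalCDFLogRemainder_atBot.mul tendsto_inv_sq_atBot)
  have h1 := h.const_add 1
  rw [mul_zero, mul_zero, mul_zero, add_zero, sub_zero, add_zero] at h1
  refine h1.congr' ?_
  filter_upwards [eventually_lt_atBot 0] with x hx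
  have hx0 : x ≠ 0 := hx.ne
  rw [stdNormalCDFLogRemainder]
  field_simp
  ring

lemma tendsto_sq_add_two_log_stdNormalCDF_atBot :
    Tendsto (fun x => x ^ 2 + 2 * Real.log (stdNormalCDF x) +
      Real.log (-(2 * Real.log (stdNormalCDF x))) + Real.log (2 * π)) atBot (𝓝 0) := by
  have hratio := tendsto_neg_two_log_stdNormalCDF_div_sq_atBot
  have h := tendsto_stdNormalCDFLogRemainder_atBot.add
    ((Real.continuousAt_log one_ne_zero).tendsto.comp hratio)
  rw [Real.log_one, add_zero] at h
  refine h.congr' ?_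
  filter_upwards [eventually_lt_atBot 0, hratio.eventually_ne one_ne_zero] with x hx hne
  have hL : -(2 * Real.log (stdNormalCDF x)) ≠ 0 := (div_ne_zero_iff.1 hne).1
  rw [Function.comp_apply, Real.log_div hL (pow_ne_zero 2 hx.ne), ← neg_sq, Real.log_pow,
    stdNormalCDFLogRemainder]
  push_cast
  ring

lemma tendsto_div_sqrt_neg_two_log_stdNormalCDF_atBot :
    Tendsto (fun x => x / Real.sqrt (-(2 * Real.log (stdNormalCDF x)))) atBot (𝓝 (-1)) := by
  have h := ((tendsto_neg_two_log_stdNormalCDF_div_sq_atBot.inv₀ one_ne_zero).sqrt).neg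
  rw [inv_one, Real.sqrt_one] at h
  refine h.congr' ?_
  filter_upwards [eventually_lt_atBot 0] with x hx
  rw [inv_div, Real.sqrt_div (sq_nonneg x), Real.sqrt_sq_eq_abs, abs_of_neg hx, neg_div, neg_neg]

/-- Asymptotic expansion of the standard normal quantile: if `t` inverts `Φ` on `(0,1)`,
then as `q → 0⁺` we have `t(q) → -∞`,
`t(q)² + 2 log q + log(-2 log q) + log(2π) → 0`, and `t(q)/√(-2 log q) → -1`. -/
theorem normal_quantile_asymptotics (t : ℝ → ℝ)
    (ht : ∀ q ∈ Set.Ioo (0 : ℝ) 1, stdNormalCDF (t q) = q) :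
    Filter.Tendsto t (nhdsWithin 0 (Set.Ioi 0)) Filter.atBot ∧
    Filter.Tendsto
      (fun q : ℝ => t q ^ 2 + 2 * Real.log q + Real.log (-(2 * Real.log q)) +
        Real.log (2 * Real.pi))
      (nhdsWithin 0 (Set.Ioi 0)) (nhds 0) ∧
    Filter.Tendsto (fun q : ℝ => t q / Real.sqrt (-(2 * Real.log q)))
      (nhdsWithin 0 (Set.Ioi 0)) (nhds (-1)) := by
  have hΦt : ∀ᶠ q in 𝓝[>] 0, stdNormalCDF (t q) = q :=
    eventually_of_mem (Ioo_mem_nhdsGT one_pos) ht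
  have ht_bot := monotone_stdNormalCDF.tendsto_atBot_of_eventually_comp_eq stdNormalCDF_pos hΦt
  refine ⟨ht_bot, ?_, ?_⟩
  · refine (tendsto_sq_add_two_log_stdNormalCDF_atBot.comp ht_bot).congr' ?_
    filter_upwards [hΦt] with q hq
    simp only [Function.comp_apply, hq]
  · refine (tendsto_div_sqrt_neg_two_log_stdNormalCDF_atBot.comp ht_bot).congr' ?_
    filter_upwards [hΦt] with q hq
    simp only [Function.comp_apply, hq]
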